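/- arXiv:2106.14940 — 9 statements merged into one kernel-verified Lean document; each statement's English description precedes it below -/
import Mathlib

section
/- Let c ∈ ℂ with Re(c) ≥ 0, Im(c) ≥ 0 and c ≠ 4, and let A, B, α, β be the associated Loewner parameters for the driving function c√(1−t). Then Re(A) ≥ 0, Im(A) ≥ 0 and |A| ≥ 2; Re(B) ≥ 0, Im(B) ≤ 0 and |B| ≤ 2; Re(α) ≤ 1/2 and Im(α) ≥ 0; and Re(β) ≥ 1/2 and Im(β) ≤ 0. -/
/-! With `s = (c² - 16) ^ (1/2)`, both `c` and `s` lie in the closed first quadrant (since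
`Im (c² - 16) = 2 Re c Im c ≥ 0`), hence so does `A = (c + s) / 2`, and `Re (c s̄) ≥ 0` gives
`‖B‖ ≤ ‖A‖`. As `A B = (c² - s²) / 4 = 4`, this yields `‖B‖ ≤ 2 ≤ ‖A‖`, and `B = 4 / A` lies in the
fourth quadrant. For `α, β = (1 ∓ c / s) / 2` it remains to see that `c / s` lies in the fourth
quadrant, i.e. `arg c ≤ arg s`: subtracting `16` from `c²` can only turn it counterclockwise. -/

open ComplexConjugate

namespace Complex

lemma cpow_inv_two_re_nonneg (w : ℂ) : 0 ≤ (w ^ (2⁻¹ : ℂ)).re := by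
  rw [cpow_inv_two_re]; exact Real.sqrt_nonneg _

lemma cpow_inv_two_im_nonneg {w : ℂ} (hw : 0 ≤ w.im) : 0 ≤ (w ^ (2⁻¹ : ℂ)).im := by
  rw [cpow_inv_two_im_eq_sqrt hw]; exact Real.sqrt_nonneg _

lemma re_mul_conj_nonneg {z w : ℂ} (hz : 0 ≤ z.re ∧ 0 ≤ z.im) (hw : 0 ≤ w.re ∧ 0 ≤ w.im) :
    0 ≤ (z * conj w).re := by
  simp only [mul_re, conj_re, conj_im, mul_neg, sub_neg_eq_add]
  have := mul_nonneg hz.1 hw.1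
  have := mul_nonneg hz.2 hw.2
  positivity

/-- `z = c * conj s` satisfies `z ^ 2 = ‖c‖ ^ 4 - r * c ^ 2`, so `z.re * z.im = -r * c.re * c.im ≤ 0`
while `z.re ≥ 0`. In the degenerate case `z.re = 0`, a positive `z.im` would force `s` real and
nonzero and `c` purely imaginary, contradicting `s ^ 2 = c ^ 2 - r`. -/
lemma im_mul_conj_nonpos_of_sq_eq_sq_sub {c s : ℂ} {r : ℝ} (hr : 0 ≤ r)
    (hc : 0 ≤ c.re ∧ 0 ≤ c.im) (hs : 0 ≤ s.re ∧ 0 ≤ s.im) (hsq : s ^ 2 = c ^ 2 - r) :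
    (c * conj s).im ≤ 0 := by
  have hz_re : 0 ≤ (c * conj s).re := re_mul_conj_nonneg hc hs
  obtain ⟨hcre, hcim⟩ := hc
  obtain ⟨hsre, hsim⟩ := hs
  have hsq_re : s.re ^ 2 - s.im ^ 2 = c.re ^ 2 - c.im ^ 2 - r := by
    simpa [sq] using congrArg re hsq
  have hsq_im : s.re * s.im = c.re * c.im := by
    have := congrArg im hsq
    simp only [sq, mul_im, sub_im, ofReal_im, sub_zero] at this
    linarith
  have hz : (c * conj s).re * (c * conj s).im = -r * (c.re * c.im) := by
    simp only [mul_re, mul_im, conj_re, conj_im]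
    linear_combination c.re * c.im * hsq_re - (c.re ^ 2 - c.im ^ 2) * hsq_im
  rcases hz_re.lt_or_eq with hpos | hzero
  · exact nonpos_of_mul_nonpos_right (by rw [hz]; have := mul_nonneg hcre hcim; nlinarith) hpos
  · simp only [mul_re, mul_im, conj_re, conj_im] at hzero ⊢
    nlinarith [mul_nonneg hcre hsre, mul_nonneg hcim hsim, mul_nonneg hcim hsre, mul_nonneg hcre hsim]

lemma re_div_nonneg {z w : ℂ} (h : 0 ≤ (z * conj w).re) : 0 ≤ (z / w).re := by
  rw [div_eq_mul_inv, inv_def, ← mul_assoc, re_mul_ofReal]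
  exact mul_nonneg h (inv_nonneg.mpr (normSq_nonneg w))

lemma im_div_nonpos {z w : ℂ} (h : (z * conj w).im ≤ 0) : (z / w).im ≤ 0 := by
  rw [div_eq_mul_inv, inv_def, ← mul_assoc, im_mul_ofReal]
  exact mul_nonpos_of_nonpos_of_nonneg h (inv_nonneg.mpr (normSq_nonneg w))

lemma norm_sub_le_norm_add_of_re_mul_conj_nonneg {z w : ℂ} (h : 0 ≤ (z * conj w).re) :
    ‖z - w‖ ≤ ‖z + w‖ := by
  rw [← sq_le_sq₀ (norm_nonneg _) (norm_nonneg _), Complex.sq_norm, Complex.sq_norm, normSq_sub,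
    normSq_add]
  linarith

lemma two_le_norm_and_norm_le_two_of_mul_eq_four {a b : ℂ} (hab : a * b = 4) (hle : ‖b‖ ≤ ‖a‖) :
    2 ≤ ‖a‖ ∧ ‖b‖ ≤ 2 := by
  have h : ‖a‖ * ‖b‖ = 4 := by rw [← norm_mul, hab]; norm_num
  have := norm_nonneg b
  constructor <;> nlinarith

end Complex

open Complex in
theorem loewner_parameters_location_general
    (c A B α β : ℂ) (hcre : 0 ≤ c.re) (hcim : 0 ≤ c.im)
    (hA : A = (c + (c ^ 2 - 16) ^ ((1 : ℂ) / 2)) / 2)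
    (hB : B = (c - (c ^ 2 - 16) ^ ((1 : ℂ) / 2)) / 2)
    (hα : α = (1 - c / (c ^ 2 - 16) ^ ((1 : ℂ) / 2)) / 2)
    (hβ : β = (1 + c / (c ^ 2 - 16) ^ ((1 : ℂ) / 2)) / 2) :
    (0 ≤ A.re ∧ 0 ≤ A.im ∧ 2 ≤ ‖A‖) ∧
    (0 ≤ B.re ∧ B.im ≤ 0 ∧ ‖B‖ ≤ 2) ∧
    (α.re ≤ 1 / 2 ∧ 0 ≤ α.im) ∧
    (1 / 2 ≤ β.re ∧ β.im ≤ 0) := by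
  rw [one_div (2 : ℂ)] at hA hB hα hβ
  set s := (c ^ 2 - 16) ^ (2⁻¹ : ℂ)
  have hsq : s ^ 2 = c ^ 2 - (16 : ℝ) := by simp only [s, cpow_ofNat_inv_pow, ofReal_ofNat]
  have hc : 0 ≤ c.re ∧ 0 ≤ c.im := ⟨hcre, hcim⟩
  have hs : 0 ≤ s.re ∧ 0 ≤ s.im :=
    ⟨cpow_inv_two_re_nonneg _, cpow_inv_two_im_nonneg (by simp [sq]; positivity)⟩
  have hcs_re := re_mul_conj_nonneg hc hs
  have hcs_im := im_mul_conj_nonpos_of_sq_eq_sq_sub (by norm_num) hc hs hsq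
  have hAB : A * B = 4 := by
    rw [hA, hB]; linear_combination (norm := (push_cast; ring)) (-1 / 4 : ℂ) * hsq
  obtain ⟨hA_norm, hB_norm⟩ := two_le_norm_and_norm_le_two_of_mul_eq_four hAB (by
    rw [hA, hB, norm_div, norm_div]
    gcongr
    exact norm_sub_le_norm_add_of_re_mul_conj_nonneg hcs_re)
  have hA_re : 0 ≤ A.re := by rw [hA, div_ofNat_re, add_re]; linarith
  have hA_im : 0 ≤ A.im := by rw [hA, div_ofNat_im, add_im]; linarith
  have hB_eq : B = 4 / A := by
    rw [eq_div_iff (by rintro rfl; simp at hAB), mul_comm, hAB]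
  have hB_re : 0 ≤ B.re := hB_eq ▸ re_div_nonneg (by simpa using hA_re)
  have hB_im : B.im ≤ 0 := hB_eq ▸ im_div_nonpos (by simpa using hA_im)
  have ht_re := re_div_nonneg hcs_re
  have ht_im := im_div_nonpos hcs_im
  subst hα hβ
  simp only [div_ofNat_re, div_ofNat_im, add_re, add_im, sub_re, sub_im, one_re, one_im]
  exact ⟨⟨hA_re, hA_im, hA_norm⟩, ⟨hB_re, hB_im, hB_norm⟩, ⟨by linarith, by linarith⟩,
    ⟨by linarith, by linarith⟩⟩

theorem loewner_parameters_location
    (c A B α β : ℂ) (hcre : 0 ≤ c.re) (hcim : 0 ≤ c.im) (hc4 : c ≠ 4)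
    (hA : A = (c + (c ^ 2 - 16) ^ ((1 : ℂ) / 2)) / 2)
    (hB : B = (c - (c ^ 2 - 16) ^ ((1 : ℂ) / 2)) / 2)
    (hα : α = (1 - c / (c ^ 2 - 16) ^ ((1 : ℂ) / 2)) / 2)
    (hβ : β = (1 + c / (c ^ 2 - 16) ^ ((1 : ℂ) / 2)) / 2) :
    (0 ≤ A.re ∧ 0 ≤ A.im ∧ 2 ≤ ‖A‖) ∧
    (0 ≤ B.re ∧ B.im ≤ 0 ∧ ‖B‖ ≤ 2) ∧
    (α.re ≤ 1 / 2 ∧ 0 ≤ α.im) ∧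
    (1 / 2 ≤ β.re ∧ β.im ≤ 0) :=
  loewner_parameters_location_general c A B α β hcre hcim hA hB hα hβ
end

section
/- Let c ∈ ℂ, let t ∈ [0,1), and let g : ℝ → ℂ be a function that has derivative 2/(g(t) − c·√(1−t)) at the point t, with g(t) ≠ c·√(1−t). Then the function s ↦ g(s)/√(1−s) has derivative at t equal to (1/(2(1−t)))·(G² − c·G + 4)/(G − c), where G = g(t)/√(1−t). -/
/-! Writing `g = √(1 - t) · G`, the quotient rule gives
`G' = (g' + G / (2√(1 - t))) / √(1 - t)`, and substituting the Loewner equation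
`g' = 2 / (√(1 - t) (G - c))` collects everything over `2 (1 - t) (G - c)`. -/

open Complex

lemma hasDerivAt_ofReal_sqrt_one_sub {t : ℝ} (ht : t < 1) :
    HasDerivAt (fun s : ℝ => (Real.sqrt (1 - s) : ℂ))
      (((-(1 / (2 * Real.sqrt (1 - t))) : ℝ)) : ℂ) t := by
  have h : HasDerivAt (fun s : ℝ => 1 - s) (-1) t := by
    simpa using (hasDerivAt_id t).const_sub 1
  have hsqrt := h.sqrt (sub_pos.mpr ht).ne'
  rw [neg_div] at hsqrt
  exact hsqrt.ofReal_comp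

lemma HasDerivAt.div_sqrt_one_sub {g : ℝ → ℂ} {g' : ℂ} {t : ℝ} (hg : HasDerivAt g g' t)
    (ht : t < 1) :
    HasDerivAt (fun s : ℝ => g s / (Real.sqrt (1 - s) : ℂ))
      ((g' + g t / (2 * (1 - (t : ℂ)))) / (Real.sqrt (1 - t) : ℂ)) t := by
  have hr : 0 < Real.sqrt (1 - t) := Real.sqrt_pos.mpr (sub_pos.mpr ht)
  have hrC : (Real.sqrt (1 - t) : ℂ) ≠ 0 := ofReal_ne_zero.mpr hr.ne'
  have hr2 : (Real.sqrt (1 - t) : ℂ) ^ 2 = 1 - t := by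
    exact_mod_cast Real.sq_sqrt (sub_pos.mpr ht).le
  refine (hg.div (hasDerivAt_ofReal_sqrt_one_sub ht) hrC).congr_deriv ?_
  rw [← hr2]
  push_cast
  field_simp
  ring

lemma loewner_rescaled_rhs {r G c : ℂ} (hr : r ≠ 0) (hG : G ≠ c) :
    (2 / (r * G - c * r) + r * G / (2 * r ^ 2)) / r
      = 1 / (2 * r ^ 2) * ((G ^ 2 - c * G + 4) / (G - c)) := by
  have hGc : G - c ≠ 0 := sub_ne_zero.mpr hG
  rw [show r * G - c * r = r * (G - c) by ring]
  field_simp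
  ring

theorem loewner_G_derivative_general
    (c : ℂ) (t : ℝ) (ht1 : t < 1) (g : ℝ → ℂ)
    (hne : g t ≠ c * (Real.sqrt (1 - t) : ℂ))
    (hg : HasDerivAt g (2 / (g t - c * (Real.sqrt (1 - t) : ℂ))) t) :
    HasDerivAt (fun s : ℝ => g s / (Real.sqrt (1 - s) : ℂ))
      ((1 / (2 * (1 - (t : ℂ)))) *
        (((g t / (Real.sqrt (1 - t) : ℂ)) ^ 2
            - c * (g t / (Real.sqrt (1 - t) : ℂ)) + 4)
          / (g t / (Real.sqrt (1 - t) : ℂ) - c))) t := by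
  have hr2 : (Real.sqrt (1 - t) : ℂ) ^ 2 = 1 - t := by
    exact_mod_cast Real.sq_sqrt (sub_pos.mpr ht1).le
  set r : ℂ := (Real.sqrt (1 - t) : ℂ)
  have hr : r ≠ 0 := ofReal_ne_zero.mpr (Real.sqrt_pos.mpr (sub_pos.mpr ht1)).ne'
  set G := g t / r
  have hgG : g t = r * G := (mul_div_cancel₀ _ hr).symm
  have hG : G ≠ c := fun h => hne (by rw [hgG, h, mul_comm])
  refine (hg.div_sqrt_one_sub ht1).congr_deriv ?_
  rw [← hr2, hgG]
  exact loewner_rescaled_rhs hr hG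

theorem loewner_G_derivative
    (c : ℂ) (t : ℝ) (ht0 : 0 ≤ t) (ht1 : t < 1) (g : ℝ → ℂ)
    (hne : g t ≠ c * (Real.sqrt (1 - t) : ℂ))
    (hg : HasDerivAt g (2 / (g t - c * (Real.sqrt (1 - t) : ℂ))) t) :
    HasDerivAt (fun s : ℝ => g s / (Real.sqrt (1 - s) : ℂ))
      ((1 / (2 * (1 - (t : ℂ)))) *
        (((g t / (Real.sqrt (1 - t) : ℂ)) ^ 2
            - c * (g t / (Real.sqrt (1 - t) : ℂ)) + 4)
          / (g t / (Real.sqrt (1 - t) : ℂ) - c))) t :=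
  loewner_G_derivative_general c t ht1 g hne hg
end

section
/- Let c ∈ ℂ with c ≠ 4 and c ≠ −4, and let A, B, α, β be the associated Loewner parameters for the driving function c√(1−t). Then for every s ∈ ℂ with s ≠ 0 and every w ∈ ℂ with w ≠ c·s, w ≠ A·s and w ≠ B·s, one has α·(2/(w − c·s) + A/(2s))/(w − A·s) + β·(2/(w − c·s) + B/(2s))/(w − B·s) = 0. (This identity expresses that, along the Loewner flow driven by c√(1−t), the time derivative of α·log(g_t(z) − A√(1−t)) + β·log(g_t(z) − B√(1−t)) vanishes, with s playing the role of √(1−t) and w the role of g_t(z).) -/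
/-!
Since `A + B = c` and `A * B = 4`, one has `4 * s + A * (w - c * s) = A * (w - A * s)`, so
`2 / (w - c * s) + A / (2 * s) = A * (w - A * s) / (2 * s * (w - c * s))` and the factor
`w - A * s` cancels; likewise with `B`. The sum therefore collapses to
`(α * A + β * B) / (2 * s * (w - c * s))`, and `α * A + β * B = 0` for the given weights.
-/

section LoewnerIdentity

variable {K : Type*} [Field K] [NeZero (2 : K)] {c A B α β s w : K}

lemma two_div_add_div_eq_of_add_of_mul (hadd : A + B = c) (hmul : A * B = 4) (hs : s ≠ 0)
    (hwc : w ≠ c * s) :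
    2 / (w - c * s) + A / (2 * s) = A * (w - A * s) / (2 * s * (w - c * s)) := by
  have hwc' : w - c * s ≠ 0 := sub_ne_zero.mpr hwc
  field_simp
  linear_combination (-s) * hmul + A * s * hadd

lemma loewner_summand_eq (hadd : A + B = c) (hmul : A * B = 4) (hs : s ≠ 0)
    (hwc : w ≠ c * s) (hwA : w ≠ A * s) :
    α * (2 / (w - c * s) + A / (2 * s)) / (w - A * s) = α * A / (2 * s * (w - c * s)) := by
  have hwA' : w - A * s ≠ 0 := sub_ne_zero.mpr hwA
  rw [two_div_add_div_eq_of_add_of_mul hadd hmul hs hwc]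
  field_simp

lemma loewner_sum_eq_zero (hadd : A + B = c) (hmul : A * B = 4) (hweight : α * A + β * B = 0)
    (hs : s ≠ 0) (hwc : w ≠ c * s) (hwA : w ≠ A * s) (hwB : w ≠ B * s) :
    α * (2 / (w - c * s) + A / (2 * s)) / (w - A * s)
      + β * (2 / (w - c * s) + B / (2 * s)) / (w - B * s) = 0 := by
  rw [loewner_summand_eq hadd hmul hs hwc hwA,
    loewner_summand_eq ((add_comm B A).trans hadd) ((mul_comm B A).trans hmul) hs hwc hwB,
    ← add_div, hweight, zero_div]

end LoewnerIdentity

section LoewnerParameters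

variable {K : Type*} [Field K] [NeZero (2 : K)] {c d : K}

lemma loewner_params_add : (c + d) / 2 + (c - d) / 2 = c := by
  field_simp
  ring

lemma loewner_params_mul (hd : d ^ 2 = c ^ 2 - 16) : (c + d) / 2 * ((c - d) / 2) = 4 := by
  field_simp
  linear_combination -hd

lemma loewner_params_weight (hd0 : d ≠ 0) :
    (1 - c / d) / 2 * ((c + d) / 2) + (1 + c / d) / 2 * ((c - d) / 2) = 0 := by
  field_simp
  ring

end LoewnerParameters

lemma Complex.cpow_one_half_sq (z : ℂ) : (z ^ ((1 : ℂ) / 2)) ^ 2 = z := by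
  rw [one_div]
  exact_mod_cast Complex.cpow_nat_inv_pow z two_ne_zero

lemma sq_sub_sixteen_ne_zero {c : ℂ} (hc4 : c ≠ 4) (hc4' : c ≠ -4) : c ^ 2 - 16 ≠ 0 := by
  have : c ^ 2 - 16 = (c - 4) * (c + 4) := by ring
  rw [this]
  exact mul_ne_zero (sub_ne_zero.mpr hc4) (fun h => hc4' (eq_neg_of_add_eq_zero_left h))

theorem loewner_log_time_derivative_vanishes
    (c A B α β : ℂ) (hc4 : c ≠ 4) (hc4' : c ≠ -4)
    (hA : A = (c + (c ^ 2 - 16) ^ ((1 : ℂ) / 2)) / 2)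
    (hB : B = (c - (c ^ 2 - 16) ^ ((1 : ℂ) / 2)) / 2)
    (hα : α = (1 - c / (c ^ 2 - 16) ^ ((1 : ℂ) / 2)) / 2)
    (hβ : β = (1 + c / (c ^ 2 - 16) ^ ((1 : ℂ) / 2)) / 2) :
    ∀ s : ℂ, s ≠ 0 → ∀ w : ℂ, w ≠ c * s → w ≠ A * s → w ≠ B * s →
      α * (2 / (w - c * s) + A / (2 * s)) / (w - A * s)
        + β * (2 / (w - c * s) + B / (2 * s)) / (w - B * s) = 0 := by
  intro s hs w hwc hwA hwB
  have hd : ((c ^ 2 - 16) ^ ((1 : ℂ) / 2)) ^ 2 = c ^ 2 - 16 := Complex.cpow_one_half_sq _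
  have hd0 : (c ^ 2 - 16) ^ ((1 : ℂ) / 2) ≠ 0 := fun h0 =>
    sq_sub_sixteen_ne_zero hc4 hc4' (by rw [← hd, h0]; ring)
  subst hA hB hα hβ
  exact loewner_sum_eq_zero loewner_params_add (loewner_params_mul hd)
    (loewner_params_weight hd0) hs hwc hwA hwB
end

section
/- Let c ∈ ℂ with Re(c) ≥ 0 and Im(c) > 0, and let λ(t) = c·√(1−t). Let 0 ≤ τ < u ≤ 1, and suppose g : ℝ → ℂ satisfies, for every t ∈ [τ, u), g(t) ≠ λ(t) and g has derivative 2/(g(t) − λ(t)) at t. If Im(g(τ)) ≥ Im(λ(τ)), then Im(g(t)) ≥ Im(λ(t)) for all t ∈ [τ, u). -/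
open Set

/-- Barrier argument: where `g` touches the level `Im λ`, the difference `g - λ` is real, so
`Im g` has derivative `Im (2 / (g - λ)) = 0`, while `Im λ` is strictly decreasing. -/
theorem loewner_im_driving_le_im_of_deriv_neg {lam g : ℝ → ℂ} {μ' : ℝ → ℝ} {a b : ℝ}
    (hlam : ∀ x ∈ Icc a b, HasDerivAt (fun t => (lam t).im) (μ' x) x)
    (hμ' : ∀ x ∈ Icc a b, μ' x < 0)
    (hg : ∀ x ∈ Icc a b, g x ≠ lam x ∧ HasDerivAt g (2 / (g x - lam x)) x)
    (hinit : (lam a).im ≤ (g a).im) :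
    ∀ x ∈ Icc a b, (lam x).im ≤ (g x).im := by
  have hgim : ∀ x ∈ Icc a b, HasDerivAt (fun t => (g t).im) (2 / (g x - lam x)).im x :=
    fun x hx => Complex.imCLM.hasFDerivAt.comp_hasDerivAt x (hg x hx).2
  refine image_le_of_deriv_right_lt_deriv_boundary' (f' := μ')
    (fun x hx => (hlam x hx).continuousAt.continuousWithinAt)
    (fun x hx => (hlam x (Ico_subset_Icc_self hx)).hasDerivWithinAt) hinit
    (fun x hx => (hgim x hx).continuousAt.continuousWithinAt)
    (fun x hx => (hgim x (Ico_subset_Icc_self hx)).hasDerivWithinAt) ?_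
  intro x hx htouch
  have hreal : (g x - lam x).im = 0 := by rw [Complex.sub_im, htouch, sub_self]
  have hzero : (2 / (g x - lam x)).im = 0 := by simp [Complex.div_im, hreal]
  rw [hzero]
  exact hμ' x (Ico_subset_Icc_self hx)

theorem hasDerivAt_sqrt_one_sub {x : ℝ} (hx : x < 1) :
    HasDerivAt (fun t => Real.sqrt (1 - t)) (-(2 * Real.sqrt (1 - x))⁻¹) x := by
  have h := (Real.hasDerivAt_sqrt (sub_pos.mpr hx).ne').comp x
    ((hasDerivAt_id x).const_sub 1)
  simpa [Function.comp_def, div_eq_inv_mul] using h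

theorem loewner_lower_halfplane_preserved_general
    (c : ℂ) (hcim : 0 < c.im)
    (τ u : ℝ) (hu : u ≤ 1)
    (g : ℝ → ℂ)
    (h : ∀ t ∈ Set.Ico τ u,
      g t ≠ c * (Real.sqrt (1 - t) : ℂ) ∧
      HasDerivAt g (2 / (g t - c * (Real.sqrt (1 - t) : ℂ))) t)
    (hinit : (c * (Real.sqrt (1 - τ) : ℂ)).im ≤ (g τ).im) :
    ∀ t ∈ Set.Ico τ u, (c * (Real.sqrt (1 - t) : ℂ)).im ≤ (g t).im := by
  intro t ⟨hτt, htu⟩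
  have hsub : Icc τ t ⊆ Ico τ u := Icc_subset_Ico_right htu
  have hlt_one : ∀ x ∈ Icc τ t, x < 1 := fun x hx => (hx.2.trans_lt htu).trans_le hu
  refine loewner_im_driving_le_im_of_deriv_neg
    (μ' := fun x => c.im * -(2 * Real.sqrt (1 - x))⁻¹) (b := t)
    (fun x hx => ?_) (fun x hx => ?_) (fun x hx => h x (hsub hx)) hinit t ⟨hτt, le_rfl⟩
  · simpa only [Complex.im_mul_ofReal] using
      (hasDerivAt_sqrt_one_sub (hlt_one x hx)).const_mul c.im
  · have : 0 < Real.sqrt (1 - x) := Real.sqrt_pos.mpr (sub_pos.mpr (hlt_one x hx))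
    exact mul_neg_of_pos_of_neg hcim (neg_neg_of_pos (by positivity))

theorem loewner_lower_halfplane_preserved
    (c : ℂ) (hcre : 0 ≤ c.re) (hcim : 0 < c.im)
    (τ u : ℝ) (hτ : 0 ≤ τ) (hτu : τ < u) (hu : u ≤ 1)
    (g : ℝ → ℂ)
    (h : ∀ t ∈ Set.Ico τ u,
      g t ≠ c * (Real.sqrt (1 - t) : ℂ) ∧
      HasDerivAt g (2 / (g t - c * (Real.sqrt (1 - t) : ℂ))) t)
    (hinit : (c * (Real.sqrt (1 - τ) : ℂ)).im ≤ (g τ).im) :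
    ∀ t ∈ Set.Ico τ u, (c * (Real.sqrt (1 - t) : ℂ)).im ≤ (g t).im :=
  loewner_lower_halfplane_preserved_general c hcim τ u hu g h hinit
end

section
/- Let λ : ℝ → ℂ be any driving function, let u > 0, and suppose g : ℝ → ℂ satisfies g(0) = w and, for every t ∈ [0, u), g(t) ≠ λ(t) and g has derivative 2/(g(t) − λ(t)) at t. If Re(w) > Re(λ(t)) for all t ∈ [0, u), then Re(g(t)) ≥ Re(w) for all t ∈ [0, u); and if Re(w) < Re(λ(t)) for all t ∈ [0, u), then Re(g(t)) ≤ Re(w) for all t ∈ [0, u). (Consequently any point starting strictly outside the closed vertical strip spanned by the values of the driving function remains outside it, so the left Loewner hull is contained in that vertical strip.) -/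
/-!
The real part of the Loewner vector field is
`Re (2 / (z - λ)) = 2 (Re z - Re λ) / |z - λ|²`, so whenever `Re g(t)` returns to the level
`Re w` while `Re λ(t)` lies strictly on one side of it, `Re g` is moving strictly away from
`λ`. The level `Re w` is therefore a barrier that `Re g` cannot cross.
-/

open Set

theorem Complex.inv_re_pos_iff {z : ℂ} : 0 < z⁻¹.re ↔ 0 < z.re := by
  rcases eq_or_ne z 0 with rfl | hz
  · simp
  · rw [Complex.inv_re, div_pos_iff_of_pos_right (Complex.normSq_pos.2 hz)]

section Barrier

variable {f f' : ℝ → ℝ} {a b c : ℝ}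

theorem le_of_deriv_neg_at_level (hfa : f a ≤ c) (hf : ∀ t ∈ Ico a b, HasDerivAt f (f' t) t)
    (hlevel : ∀ t ∈ Ico a b, f t = c → f' t < 0) : ∀ t ∈ Ico a b, f t ≤ c := by
  intro t ht
  have hsub : Icc a t ⊆ Ico a b := Icc_subset_Ico_right ht.2
  exact image_le_of_deriv_right_lt_deriv_boundary'
    (fun s hs => (hf s (hsub hs)).continuousAt.continuousWithinAt)
    (fun s hs => (hf s (hsub (Ico_subset_Icc_self hs))).hasDerivWithinAt) hfa
    continuousOn_const (fun _ _ => hasDerivWithinAt_const _ _ c)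
    (fun s hs => hlevel s (hsub (Ico_subset_Icc_self hs))) ⟨ht.1, le_rfl⟩

theorem ge_of_deriv_pos_at_level (hfa : c ≤ f a) (hf : ∀ t ∈ Ico a b, HasDerivAt f (f' t) t)
    (hlevel : ∀ t ∈ Ico a b, f t = c → 0 < f' t) : ∀ t ∈ Ico a b, c ≤ f t := by
  intro t ht
  have hsub : Icc a t ⊆ Ico a b := Icc_subset_Ico_right ht.2
  exact image_le_of_deriv_right_lt_deriv_boundary' continuousOn_const
    (fun _ _ => hasDerivWithinAt_const _ _ c) hfa
    (fun s hs => (hf s (hsub hs)).continuousAt.continuousWithinAt)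
    (fun s hs => (hf s (hsub (Ico_subset_Icc_self hs))).hasDerivWithinAt)
    (fun s hs hs' => hlevel s (hsub (Ico_subset_Icc_self hs)) hs'.symm) ⟨ht.1, le_rfl⟩

end Barrier

theorem HasDerivAt.complex_re {f : ℝ → ℂ} {f' : ℂ} {t : ℝ} (hf : HasDerivAt f f' t) :
    HasDerivAt (fun s => (f s).re) f'.re t :=
  Complex.reCLM.hasFDerivAt.comp_hasDerivAt t hf

theorem re_two_div_sub_pos_iff {z a : ℂ} : 0 < (2 / (z - a)).re ↔ a.re < z.re := by
  rw [div_eq_mul_inv, ← Complex.ofReal_ofNat, Complex.re_ofReal_mul,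
    mul_pos_iff_of_pos_left two_pos, Complex.inv_re_pos_iff, Complex.sub_re, sub_pos]

theorem re_two_div_sub_neg_iff {z a : ℂ} : (2 / (z - a)).re < 0 ↔ z.re < a.re := by
  rw [← neg_pos, ← Complex.neg_re, ← div_neg, neg_sub, re_two_div_sub_pos_iff]

theorem loewner_hull_in_vertical_strip_general
    (lam : ℝ → ℂ) (u : ℝ) (g : ℝ → ℂ) (w : ℂ) (hg0 : g 0 = w)
    (h : ∀ t ∈ Set.Ico (0 : ℝ) u,
      g t ≠ lam t ∧ HasDerivAt g (2 / (g t - lam t)) t) :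
    ((∀ t ∈ Set.Ico (0 : ℝ) u, (lam t).re < w.re) →
        ∀ t ∈ Set.Ico (0 : ℝ) u, w.re ≤ (g t).re) ∧
    ((∀ t ∈ Set.Ico (0 : ℝ) u, w.re < (lam t).re) →
        ∀ t ∈ Set.Ico (0 : ℝ) u, (g t).re ≤ w.re) := by
  have hre (t) (ht : t ∈ Ico (0 : ℝ) u) := (h t ht).2.complex_re
  refine ⟨fun hlam => ge_of_deriv_pos_at_level (by rw [hg0]) hre fun t ht heq => ?_,
    fun hlam => le_of_deriv_neg_at_level (by rw [hg0]) hre fun t ht heq => ?_⟩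
  · exact re_two_div_sub_pos_iff.2 (heq ▸ hlam t ht)
  · exact re_two_div_sub_neg_iff.2 (heq ▸ hlam t ht)

theorem loewner_hull_in_vertical_strip
    (lam : ℝ → ℂ) (u : ℝ) (hu : 0 < u) (g : ℝ → ℂ) (w : ℂ) (hg0 : g 0 = w)
    (h : ∀ t ∈ Set.Ico (0 : ℝ) u,
      g t ≠ lam t ∧ HasDerivAt g (2 / (g t - lam t)) t) :
    ((∀ t ∈ Set.Ico (0 : ℝ) u, (lam t).re < w.re) →
        ∀ t ∈ Set.Ico (0 : ℝ) u, w.re ≤ (g t).re) ∧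
    ((∀ t ∈ Set.Ico (0 : ℝ) u, w.re < (lam t).re) →
        ∀ t ∈ Set.Ico (0 : ℝ) u, (g t).re ≤ w.re) :=
  loewner_hull_in_vertical_strip_general lam u g w hg0 h
end

section
/- Let c ∈ ℂ, let τ ≥ 0 and t ≥ 0 with τ + t > 0, and let g : ℝ → ℂ be a function that has derivative 2/(g(t) − c·√(τ+t)) at the point t, with g(t) ≠ c·√(τ+t). Then the function s ↦ g(s)/√(τ+s) has derivative at t equal to −(1/(2(τ+t)))·(W² − c·W − 4)/(W − c), where W = g(t)/√(τ+t). -/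
/-!
Write `r = √(τ + t)` and `W = g t / r`, so that `g t = r W` and `r² = τ + t`. The quotient rule
gives `(g / √(τ + ·))' = g' / r - W / (2 r²)`, and substituting the Loewner equation
`g' = 2 / (r (W - c))` leaves the rational identity `2 / (r² (W - c)) - W / (2 r²) =
-(W² - c W - 4) / (2 r² (W - c))`.
-/

theorem hasDerivAt_ofReal_sqrt_add {τ t : ℝ} (h : 0 < τ + t) :
    HasDerivAt (fun s : ℝ => (Real.sqrt (τ + s) : ℂ)) ((1 / (2 * Real.sqrt (τ + t)) : ℝ) : ℂ) t :=
  (((hasDerivAt_id t).const_add τ).sqrt h.ne').ofReal_comp.congr_deriv (by simp)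

theorem ofReal_sqrt_ne_zero {x : ℝ} (h : 0 < x) : (Real.sqrt x : ℂ) ≠ 0 :=
  Complex.ofReal_ne_zero.2 (Real.sqrt_pos.2 h).ne'

theorem ofReal_sqrt_sq {x : ℝ} (h : 0 ≤ x) : (Real.sqrt x : ℂ) ^ 2 = x := by
  rw [← Complex.ofReal_pow, Real.sq_sqrt h]

theorem HasDerivAt.div_ofReal_sqrt_add {g : ℝ → ℂ} {g' : ℂ} {τ t : ℝ} (hg : HasDerivAt g g' t)
    (h : 0 < τ + t) :
    HasDerivAt (fun s : ℝ => g s / (Real.sqrt (τ + s) : ℂ))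
      (g' / Real.sqrt (τ + t) - g t / Real.sqrt (τ + t) / (2 * ((τ : ℂ) + t))) t := by
  have hr := ofReal_sqrt_ne_zero h
  refine (hg.div (hasDerivAt_ofReal_sqrt_add h) hr).congr_deriv ?_
  rw [← Complex.ofReal_add, ← ofReal_sqrt_sq h.le]
  push_cast
  field_simp

theorem loewner_rescaled_field_eq (c W r : ℂ) (hr : r ≠ 0) (hW : W - c ≠ 0) :
    2 / (r * W - c * r) / r - W / (2 * r ^ 2) =
      -(1 / (2 * r ^ 2)) * ((W ^ 2 - c * W - 4) / (W - c)) := by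
  rw [show r * W - c * r = r * (W - c) by ring]
  field_simp
  ring

theorem loewner_W_derivative_general
    (c : ℂ) (τ t : ℝ) (hpos : 0 < τ + t)
    (g : ℝ → ℂ)
    (hne : g t ≠ c * (Real.sqrt (τ + t) : ℂ))
    (hg : HasDerivAt g (2 / (g t - c * (Real.sqrt (τ + t) : ℂ))) t) :
    HasDerivAt (fun s : ℝ => g s / (Real.sqrt (τ + s) : ℂ))
      (-(1 / (2 * ((τ : ℂ) + t))) *
        (((g t / (Real.sqrt (τ + t) : ℂ)) ^ 2
            - c * (g t / (Real.sqrt (τ + t) : ℂ)) - 4)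
          / (g t / (Real.sqrt (τ + t) : ℂ) - c))) t := by
  have hr := ofReal_sqrt_ne_zero hpos
  have hquot := hg.div_ofReal_sqrt_add hpos
  have hsq : ((τ : ℂ) + t) = (Real.sqrt (τ + t) : ℂ) ^ 2 := by
    rw [ofReal_sqrt_sq hpos.le, Complex.ofReal_add]
  set r : ℂ := (Real.sqrt (τ + t) : ℂ)
  set W := g t / r
  have hgW : g t = r * W := (mul_div_cancel₀ _ hr).symm
  have hWc : W - c ≠ 0 := fun h => hne (by rw [hgW, sub_eq_zero.1 h, mul_comm])
  rw [hsq] at hquot ⊢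
  rwa [hgW, loewner_rescaled_field_eq c W r hr hWc] at hquot

theorem loewner_W_derivative
    (c : ℂ) (τ t : ℝ) (hτ : 0 ≤ τ) (ht : 0 ≤ t) (hpos : 0 < τ + t)
    (g : ℝ → ℂ)
    (hne : g t ≠ c * (Real.sqrt (τ + t) : ℂ))
    (hg : HasDerivAt g (2 / (g t - c * (Real.sqrt (τ + t) : ℂ))) t) :
    HasDerivAt (fun s : ℝ => g s / (Real.sqrt (τ + s) : ℂ))
      (-(1 / (2 * ((τ : ℂ) + t))) *
        (((g t / (Real.sqrt (τ + t) : ℂ)) ^ 2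
            - c * (g t / (Real.sqrt (τ + t) : ℂ)) - 4)
          / (g t / (Real.sqrt (τ + t) : ℂ) - c))) t :=
  loewner_W_derivative_general c τ t hpos g hne hg
end

section
/- Let c ∈ ℂ with c ≠ 4i and c ≠ −4i, let D, E, δ, ε be the associated Loewner parameters for the driving function c√(τ+t), let τ > 0 and s > 0. Suppose g : ℝ → ℂ satisfies g(0) = z and, for every t ∈ [0,s], g(t) ≠ c·√(τ+t), g has derivative 2/(g(t) − c·√(τ+t)) at t, and both g(t) − D·√(τ+t) and g(t) − E·√(τ+t) lie outside the slit (−∞, 0]. Then δ·Log(g(s) − D·√(τ+s)) + ε·Log(g(s) − E·√(τ+s)) = δ·Log(z − D·√τ) + ε·Log(z − E·√τ), where Log is the principal complex logarithm. -/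
/-!
With `W t = √(τ + t)`, so that `W' = 1 / (2W)`, the quantity
`δ · Log (g - D W) + ε · Log (g - E W)` has zero derivative along the flow
`g' = 2 / (g - c W)`. After clearing denominators this reduces to the relations
`δ + ε = 1`, `δ D + ε E = 0`, `δ E + ε D = c`, `D E = -4`: `D, E` are the roots of
`x² - c x - 4` and `δ, ε` the partial-fraction weights of `(x - c) / (x² - c x - 4)`.
-/

open Complex

theorem sq_add_sixteen_ne_zero {c : ℂ} (h : c ≠ 4 * I) (h' : c ≠ -4 * I) : c ^ 2 + 16 ≠ 0 := by
  have : c ^ 2 + 16 = (c - 4 * I) * (c + 4 * I) := by linear_combination (16 : ℂ) * I_sq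
  rw [this]
  exact mul_ne_zero (sub_ne_zero.2 h) fun h0 => h' (by linear_combination h0)

structure LoewnerRelations (c D E δ ε : ℂ) : Prop where
  add_eq_one : δ + ε = 1
  mul_add_mul_eq_zero : δ * D + ε * E = 0
  mul_add_mul_eq_c : δ * E + ε * D = c
  mul_eq_neg_four : D * E = -4

theorem LoewnerRelations.of_sq_eq {c q : ℂ} (hq : q ^ 2 = c ^ 2 + 16) (hq0 : q ≠ 0) :
    LoewnerRelations c ((c + q) / 2) ((c - q) / 2) ((1 - c / q) / 2) ((1 + c / q) / 2) where
  add_eq_one := by ring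
  mul_add_mul_eq_zero := by field_simp; ring
  mul_add_mul_eq_c := by field_simp; ring
  mul_eq_neg_four := by linear_combination (-1 / 4 : ℂ) * hq

theorem LoewnerRelations.logDeriv_sum_eq_zero {c D E δ ε : ℂ} (h : LoewnerRelations c D E δ ε)
    {G W : ℂ} (hW : W ≠ 0) (hc : G - c * W ≠ 0) (hD : G - D * W ≠ 0) (hE : G - E * W ≠ 0) :
    δ * ((2 / (G - c * W) - D * (1 / (2 * W))) / (G - D * W))
      + ε * ((2 / (G - c * W) - E * (1 / (2 * W))) / (G - E * W)) = 0 := by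
  simp only [mul_div_assoc']
  rw [div_add_div _ _ hD hE, div_eq_zero_iff]
  left
  field_simp
  linear_combination (4 * c * W ^ 2) * h.add_eq_one
      + ((δ + ε) * (W * G - c * W ^ 2)) * h.mul_eq_neg_four
      + (c * W * G - G ^ 2) * h.mul_add_mul_eq_zero
      + ((-4 : ℂ) * W ^ 2) * h.mul_add_mul_eq_c

theorem LoewnerRelations.hasDerivAt_potential {c D E δ ε : ℂ} (h : LoewnerRelations c D E δ ε)
    {g W : ℝ → ℂ} {t : ℝ} (hg : HasDerivAt g (2 / (g t - c * W t)) t)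
    (hW : HasDerivAt W (1 / (2 * W t)) t) (hW0 : W t ≠ 0) (hgc : g t ≠ c * W t)
    (hD : g t - D * W t ∈ slitPlane) (hE : g t - E * W t ∈ slitPlane) :
    HasDerivAt (fun t => δ * log (g t - D * W t) + ε * log (g t - E * W t)) 0 t := by
  have hlogD := ((hg.sub (hW.const_mul D)).clog_real hD).const_mul δ
  have hlogE := ((hg.sub (hW.const_mul E)).clog_real hE).const_mul ε
  rw [← h.logDeriv_sum_eq_zero hW0 (sub_ne_zero.2 hgc) (slitPlane_ne_zero hD)
    (slitPlane_ne_zero hE)]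
  exact hlogD.add hlogE

theorem hasDerivAt_ofReal_sqrt_const_add {τ t : ℝ} (h : 0 < τ + t) :
    HasDerivAt (fun t : ℝ => (√(τ + t) : ℂ)) (1 / (2 * √(τ + t))) t := by
  have := (((hasDerivAt_id' t).const_add τ).sqrt h.ne').ofReal_comp
  simpa using this

theorem loewner_implicit_solution_sqrt_tau_add_t
    (c D E δ ε : ℂ) (hc4 : c ≠ 4 * Complex.I) (hc4' : c ≠ -4 * Complex.I)
    (hD : D = (c + (c ^ 2 + 16) ^ ((1 : ℂ) / 2)) / 2)
    (hE : E = (c - (c ^ 2 + 16) ^ ((1 : ℂ) / 2)) / 2)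
    (hδ : δ = (1 - c / (c ^ 2 + 16) ^ ((1 : ℂ) / 2)) / 2)
    (hε : ε = (1 + c / (c ^ 2 + 16) ^ ((1 : ℂ) / 2)) / 2)
    (τ s : ℝ) (hτ : 0 < τ) (hs : 0 < s)
    (g : ℝ → ℂ) (z : ℂ) (hg0 : g 0 = z)
    (h : ∀ t ∈ Set.Icc (0 : ℝ) s,
      g t ≠ c * (Real.sqrt (τ + t) : ℂ) ∧
      HasDerivAt g (2 / (g t - c * (Real.sqrt (τ + t) : ℂ))) t ∧
      (g t - D * (Real.sqrt (τ + t) : ℂ)) ∈ Complex.slitPlane ∧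
      (g t - E * (Real.sqrt (τ + t) : ℂ)) ∈ Complex.slitPlane) :
    δ * Complex.log (g s - D * (Real.sqrt (τ + s) : ℂ))
      + ε * Complex.log (g s - E * (Real.sqrt (τ + s) : ℂ))
      = δ * Complex.log (z - D * (Real.sqrt τ : ℂ))
        + ε * Complex.log (z - E * (Real.sqrt τ : ℂ)) := by
  have hrel : LoewnerRelations c D E δ ε := by
    have hq0 : (c ^ 2 + 16) ^ (1 / 2 : ℂ) ≠ 0 :=
      (cpow_ne_zero_iff_of_exponent_ne_zero (by norm_num)).2 (sq_add_sixteen_ne_zero hc4 hc4')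
    subst hD hE hδ hε
    exact .of_sq_eq (by rw [one_div]; exact cpow_ofNat_inv_pow _ 2) hq0
  set F : ℝ → ℂ := fun t => δ * log (g t - D * (√(τ + t) : ℂ)) + ε * log (g t - E * (√(τ + t) : ℂ))
  have hF : ∀ t ∈ Set.Icc 0 s, HasDerivAt F 0 t := fun t ht => by
    obtain ⟨hgc, hg, hgD, hgE⟩ := h t ht
    have hpos : 0 < τ + t := by linarith [ht.1]
    exact hrel.hasDerivAt_potential hg (hasDerivAt_ofReal_sqrt_const_add hpos)
      (ofReal_ne_zero.2 (Real.sqrt_pos.2 hpos).ne') hgc hgD hgE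
  have hconst := constant_of_has_deriv_right_zero
    (fun t ht => (hF t ht).continuousAt.continuousWithinAt)
    (fun t ht => (hF t (Set.Ico_subset_Icc_self ht)).hasDerivWithinAt) s ⟨hs.le, le_rfl⟩
  simpa [F, hg0] using hconst
end

section
/- Let c ∈ ℂ with c ≠ 4i and c ≠ −4i, let D, E, δ, ε be the associated Loewner parameters for the driving function c√(τ+t) with τ = 0, and let s > 0. Suppose g : ℝ → ℂ is continuous at 0 with g(0) = z, for every t ∈ (0,s] the point g(t) satisfies g(t) ≠ c·√t and g has derivative 2/(g(t) − c·√t) at t, and for every t ∈ [0,s] both g(t) − D·√t and g(t) − E·√t lie outside the slit (−∞, 0] (at t = 0 this says z ∉ (−∞, 0]). Then (g(s) − D·√s)^δ · (g(s) − E·√s)^ε = z, where z^w denotes the principal complex power exp(w·Log z). (This gives the explicit formula g_t^{−1}(w) = (w − D√t)^δ(w − E√t)^ε for the inverse Loewner map driven by c√t.) -/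
/-!
`D` and `E` are the two roots of `X² - c X - 4`, and `δ D + ε E = 0`, `δ + ε = 1`.
Along the flow `ġ = 2 / (g - c √t)`, the relation `D² = c D + 4` turns the derivative of
`g - D √t` into `(g - D √t) · (-D / (2 √t (g - c √t)))`, so the logarithmic derivative of
`(g - D √t)^δ (g - E √t)^ε` is `-(δ D + ε E) / (2 √t (g - c √t)) = 0`. The product is therefore
constant on `(0, s]`, and by continuity at `0` it equals `z^δ z^ε = z`.
-/

open Complex Set

theorem eq_of_continuousWithinAt_of_hasDerivAt_zero {E : Type*} [NormedAddCommGroup E]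
    [NormedSpace ℝ E] {f : ℝ → E} {a b : ℝ} (hab : a ≤ b)
    (hcont : ContinuousWithinAt f (Icc a b) a) (hderiv : ∀ t ∈ Ioc a b, HasDerivAt f 0 t) :
    f b = f a := by
  rcases hab.eq_or_lt with rfl | hab
  · rfl
  have hf : ContinuousOn f (Icc a b) := by
    intro t ht
    rcases ht.1.eq_or_lt with rfl | hat
    · exact hcont
    · exact (hderiv t ⟨hat, ht.2⟩).continuousAt.continuousWithinAt
  have hconst : EqOn f (fun _ => f b) (Ioc a b) := fun t ht =>
    (constant_of_has_deriv_right_zero (hf.mono (Icc_subset_Icc_left ht.1.le))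
      (fun x hx => (hderiv x ⟨ht.1.trans_le hx.1, hx.2.le⟩).hasDerivWithinAt) b
      ⟨ht.2, le_rfl⟩).symm
  refine (hconst.of_subset_closure hf continuousOn_const Ioc_subset_Icc_self ?_
    (left_mem_Icc.2 hab.le)).symm
  rw [closure_Ioc hab.ne]

theorem HasDerivAt.cpow_const_of_eq_mul {f : ℝ → ℂ} {t : ℝ} {k : ℂ} (δ : ℂ)
    (hf : HasDerivAt f (f t * k) t) (hft : f t ∈ slitPlane) :
    HasDerivAt (fun u => f u ^ δ) (f t ^ δ * (δ * k)) t := by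
  refine ((hasStrictDerivAt_cpow_const (c := δ) hft).hasDerivAt.comp t hf).congr_deriv ?_
  rw [cpow_sub _ _ (slitPlane_ne_zero hft), cpow_one]
  field_simp [slitPlane_ne_zero hft]

noncomputable def sqrtLoewnerInvariant (D E δ ε : ℂ) (g : ℝ → ℂ) (t : ℝ) : ℂ :=
  (g t - D * (Real.sqrt t : ℂ)) ^ δ * (g t - E * (Real.sqrt t : ℂ)) ^ ε

section LoewnerFlow

variable {c D E δ ε : ℂ} {g : ℝ → ℂ} {t : ℝ}

theorem hasDerivAt_sub_mul_sqrt (hD : D ^ 2 = c * D + 4) (ht : 0 < t)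
    (hgt : g t ≠ c * (Real.sqrt t : ℂ))
    (hg : HasDerivAt g (2 / (g t - c * (Real.sqrt t : ℂ))) t) :
    HasDerivAt (fun u => g u - D * (Real.sqrt u : ℂ))
      ((g t - D * (Real.sqrt t : ℂ)) * (-D / (2 * Real.sqrt t * (g t - c * Real.sqrt t)))) t := by
  have hsqrt : HasDerivAt (fun u : ℝ => (Real.sqrt u : ℂ)) ((1 / (2 * Real.sqrt t) : ℝ) : ℂ) t :=
    (Real.hasDerivAt_sqrt ht.ne').ofReal_comp
  refine (hg.sub (hsqrt.const_mul D)).congr_deriv ?_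
  have hr : (Real.sqrt t : ℂ) ≠ 0 := ofReal_ne_zero.2 (Real.sqrt_pos.2 ht).ne'
  have hgc : g t - c * Real.sqrt t ≠ 0 := sub_ne_zero.2 hgt
  push_cast
  field_simp
  linear_combination -(Real.sqrt t : ℂ) * hD

theorem hasDerivAt_sqrtLoewnerInvariant (hD : D ^ 2 = c * D + 4) (hE : E ^ 2 = c * E + 4)
    (hδε : δ * D + ε * E = 0) (ht : 0 < t) (hgt : g t ≠ c * (Real.sqrt t : ℂ))
    (hg : HasDerivAt g (2 / (g t - c * (Real.sqrt t : ℂ))) t)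
    (hDt : g t - D * (Real.sqrt t : ℂ) ∈ slitPlane)
    (hEt : g t - E * (Real.sqrt t : ℂ) ∈ slitPlane) :
    HasDerivAt (sqrtLoewnerInvariant D E δ ε g) 0 t := by
  have hprod := ((hasDerivAt_sub_mul_sqrt hD ht hgt hg).cpow_const_of_eq_mul δ hDt).mul
    ((hasDerivAt_sub_mul_sqrt hE ht hgt hg).cpow_const_of_eq_mul ε hEt)
  refine hprod.congr_deriv ?_
  linear_combination (-(g t - D * (Real.sqrt t : ℂ)) ^ δ * (g t - E * (Real.sqrt t : ℂ)) ^ ε /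
    (2 * Real.sqrt t * (g t - c * Real.sqrt t))) * hδε

theorem continuousAt_sqrtLoewnerInvariant (hg : ContinuousAt g t)
    (hDt : g t - D * (Real.sqrt t : ℂ) ∈ slitPlane)
    (hEt : g t - E * (Real.sqrt t : ℂ) ∈ slitPlane) :
    ContinuousAt (sqrtLoewnerInvariant D E δ ε g) t := by
  have hsqrt : Continuous (fun u : ℝ => (Real.sqrt u : ℂ)) :=
    continuous_ofReal.comp Real.continuous_sqrt
  exact ((hg.sub (hsqrt.continuousAt.const_mul D)).cpow continuousAt_const hDt).mul
    ((hg.sub (hsqrt.continuousAt.const_mul E)).cpow continuousAt_const hEt)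

end LoewnerFlow

theorem loewner_inverse_map_sqrt_t
    (c D E δ ε : ℂ) (hc4 : c ≠ 4 * Complex.I) (hc4' : c ≠ -4 * Complex.I)
    (hD : D = (c + (c ^ 2 + 16) ^ ((1 : ℂ) / 2)) / 2)
    (hE : E = (c - (c ^ 2 + 16) ^ ((1 : ℂ) / 2)) / 2)
    (hδ : δ = (1 - c / (c ^ 2 + 16) ^ ((1 : ℂ) / 2)) / 2)
    (hε : ε = (1 + c / (c ^ 2 + 16) ^ ((1 : ℂ) / 2)) / 2)
    (s : ℝ) (hs : 0 < s)
    (g : ℝ → ℂ) (z : ℂ)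
    (hcont : ContinuousAt g 0) (hg0 : g 0 = z)
    (h : ∀ t ∈ Set.Ioc (0 : ℝ) s,
      g t ≠ c * (Real.sqrt t : ℂ) ∧
      HasDerivAt g (2 / (g t - c * (Real.sqrt t : ℂ))) t)
    (hslit : ∀ t ∈ Set.Icc (0 : ℝ) s,
      (g t - D * (Real.sqrt t : ℂ)) ∈ Complex.slitPlane ∧
      (g t - E * (Real.sqrt t : ℂ)) ∈ Complex.slitPlane) :
    (g s - D * (Real.sqrt s : ℂ)) ^ δ * (g s - E * (Real.sqrt s : ℂ)) ^ ε
      = z := by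
  set q : ℂ := (c ^ 2 + 16) ^ ((1 : ℂ) / 2)
  have hc : c ^ 2 + 16 ≠ 0 := by
    have hfac : c ^ 2 + 16 = (c - 4 * I) * (c - -4 * I) := by linear_combination 16 * I_sq
    exact hfac ▸ mul_ne_zero (sub_ne_zero.2 hc4) (sub_ne_zero.2 hc4')
  have hq : q ^ 2 = c ^ 2 + 16 := by simp [q]
  have hq0 : q ≠ 0 := ne_zero_pow two_ne_zero (by rwa [hq])
  have hD2 : D ^ 2 = c * D + 4 := by rw [hD]; linear_combination hq / 4
  have hE2 : E ^ 2 = c * E + 4 := by rw [hE]; linear_combination hq / 4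
  have hδDεE : δ * D + ε * E = 0 := by rw [hδ, hε, hD, hE]; field_simp; ring
  have hδε : δ + ε = 1 := by rw [hδ, hε]; ring
  obtain ⟨hD0, hE0⟩ := hslit 0 ⟨le_rfl, hs.le⟩
  have hz : z ∈ slitPlane := by simpa [hg0] using hD0
  have hderiv : ∀ t ∈ Ioc 0 s, HasDerivAt (sqrtLoewnerInvariant D E δ ε g) 0 t := fun t ht =>
    hasDerivAt_sqrtLoewnerInvariant hD2 hE2 hδDεE ht.1 (h t ht).1 (h t ht).2
      (hslit t (Ioc_subset_Icc_self ht)).1 (hslit t (Ioc_subset_Icc_self ht)).2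
  calc sqrtLoewnerInvariant D E δ ε g s
      = sqrtLoewnerInvariant D E δ ε g 0 :=
        eq_of_continuousWithinAt_of_hasDerivAt_zero hs.le
          (continuousAt_sqrtLoewnerInvariant hcont hD0 hE0).continuousWithinAt hderiv
    _ = z ^ (δ + ε) := by
        simp [sqrtLoewnerInvariant, hg0, cpow_add _ _ (slitPlane_ne_zero hz)]
    _ = z := by rw [hδε, cpow_one]
end

section
/- Let f : ℂ → ℂ be defined by f(z) = z + 2/(z − 2√2), and let U = {z ∈ ℂ : |z − 2√2| > √2}. Then f is injective on U, and the image f(U) equals the complement in ℂ of the real segment [0, 4√2], i.e. f(U) = ℂ \ {x + 0i : x ∈ ℝ, 0 ≤ x ≤ 4√2}. (Thus f is a conformal bijection from the exterior of the closed disk of radius √2 centered at 2√2 onto the complement of the segment [0, 4√2]; this is the time-1 Loewner map for the driving function 3√2·√(1−t).) -/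
/-!
Writing `t = z - 2√2`, the map is `z ↦ 2√2 + (t + 2 / t)`, a translate of the Joukowski map
`J t = t + r² / t` with `r = √2`. If `J t = J s` then `(t - s) (t s - r²) = 0`, and outside the
circle `‖t‖ = r` we have `‖t s‖ > r²`, so `J` is injective there. For the image, the preimages of
`w` are the roots `t, s` of `X² - w X + r²`. If `‖t‖ = r` then `s = r² / t = conj t`, so
`w = 2 Re t ∈ [-2r, 2r]`; conversely, for real `w ∈ [-2r, 2r]` the roots are `(w ± i √(4r² - w²)) / 2`,
both on the circle. Off the slit neither root is on the circle and `‖t‖ ‖s‖ = r²`, so exactly one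
root lies outside it.
-/

open Complex Polynomial ComplexConjugate

theorem IsAlgClosed.exists_add_eq_and_mul_eq {K : Type*} [Field K] [IsAlgClosed K] (w p : K) :
    ∃ t s : K, t + s = w ∧ t * s = p := by
  obtain ⟨t, ht⟩ := IsAlgClosed.exists_root (C 1 * X ^ 2 + C (-w) * X + C p)
    (by rw [degree_quadratic one_ne_zero]; decide)
  refine ⟨t, w - t, by ring, ?_⟩
  simp only [IsRoot, eval_add, eval_mul, eval_C, eval_pow, eval_X] at ht
  linear_combination -ht

namespace Complex

variable {r : ℝ} {c t s w : ℂ}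

theorem im_eq_zero_and_abs_re_le_of_norm_eq (hr : 0 < r) (hsum : t + s = w)
    (hprod : t * s = (r : ℂ) ^ 2) (ht : ‖t‖ = r) : w.im = 0 ∧ |w.re| ≤ 2 * r := by
  have ht0 : t ≠ 0 := norm_pos_iff.1 (ht ▸ hr)
  have hs : s = conj t := mul_left_cancel₀ ht0 (by rw [hprod, mul_conj', ht])
  rw [← hsum, hs, add_conj]
  refine ⟨ofReal_im _, ?_⟩
  rw [ofReal_re, abs_mul, abs_two, ← ht]
  exact mul_le_mul_of_nonneg_left (abs_re_le_norm t) zero_le_two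

theorem norm_eq_of_im_eq_zero_of_abs_re_le (hr : 0 ≤ r) (hsum : t + s = w)
    (hprod : t * s = (r : ℂ) ^ 2) (him : w.im = 0) (hre : |w.re| ≤ 2 * r) : ‖t‖ = r := by
  have hs : s = (w.re : ℂ) - t := by
    rw [show (w.re : ℂ) = w from ext rfl (by simp [him]), ← hsum]; ring
  rw [hs] at hprod
  have hprod_re := congrArg re hprod
  have hprod_im := congrArg im hprod
  simp only [mul_re, mul_im, sub_re, sub_im, ofReal_re, ofReal_im, ← ofReal_pow]
    at hprod_re hprod_im
  rw [← sq_eq_sq₀ (norm_nonneg _) hr, Complex.sq_norm, normSq_apply]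
  set x := t.re
  set y := t.im
  set a := w.re
  rcases mul_eq_zero.1 (show y * (a - 2 * x) = 0 by linear_combination hprod_im) with hy | ha
  · -- `x` is a real root of `X² - a X + r²`, whose discriminant `a² - 4 r²` is `≤ 0`
    rw [hy] at hprod_re ⊢
    have : (2 * x - a) ^ 2 ≤ 0 := by nlinarith [sq_abs a, abs_nonneg a]
    nlinarith [sq_nonneg (2 * x - a)]
  · rw [show a = 2 * x by linarith] at hprod_re
    linear_combination hprod_re

theorem injOn_add_sq_div_sub (c : ℂ) (hr : 0 ≤ r) :
    Set.InjOn (fun z => z + (r : ℂ) ^ 2 / (z - c)) {z | r < ‖z - c‖} := by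
  intro z₁ (h₁ : r < ‖z₁ - c‖) z₂ (h₂ : r < ‖z₂ - c‖) heq
  have h₁0 : z₁ - c ≠ 0 := norm_pos_iff.1 (hr.trans_lt h₁)
  have h₂0 : z₂ - c ≠ 0 := norm_pos_iff.1 (hr.trans_lt h₂)
  have hfactor : (z₁ - z₂) * ((z₁ - c) * (z₂ - c) - (r : ℂ) ^ 2) = 0 := by
    simp only at heq
    field_simp at heq
    linear_combination heq
  have hprod : (z₁ - c) * (z₂ - c) ≠ (r : ℂ) ^ 2 := by
    intro h
    have := congrArg norm h
    rw [norm_mul, norm_pow, norm_real, Real.norm_of_nonneg hr] at this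
    nlinarith
  exact sub_eq_zero.1 ((mul_eq_zero.1 hfactor).resolve_right (sub_ne_zero.2 hprod))

theorem mem_image_add_sq_div_sub (hr : 0 ≤ r) (hsum : t + s = w - c)
    (hprod : t * s = (r : ℂ) ^ 2) (ht : r < ‖t‖) :
    w ∈ (fun z => z + (r : ℂ) ^ 2 / (z - c)) '' {z | r < ‖z - c‖} := by
  refine ⟨c + t, by simpa using ht, ?_⟩
  have ht0 : t ≠ 0 := norm_pos_iff.1 (hr.trans_lt ht)
  simp only [add_sub_cancel_left, ← hprod, mul_div_cancel_left₀ _ ht0]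
  linear_combination hsum

theorem image_add_sq_div_sub (c : ℂ) (hr : 0 < r) :
    (fun z => z + (r : ℂ) ^ 2 / (z - c)) '' {z | r < ‖z - c‖} =
      {w | (w - c).im = 0 ∧ |(w - c).re| ≤ 2 * r}ᶜ := by
  ext w
  constructor
  · rintro ⟨z, hz : r < ‖z - c‖, rfl⟩ ⟨him, hre⟩
    have hprod : (z - c) * ((r : ℂ) ^ 2 / (z - c)) = (r : ℂ) ^ 2 :=
      mul_div_cancel₀ _ (norm_pos_iff.1 (hr.trans hz))
    exact hz.ne' (norm_eq_of_im_eq_zero_of_abs_re_le hr.le (by ring) hprod him hre)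
  · intro hw
    obtain ⟨t, s, hsum, hprod⟩ := IsAlgClosed.exists_add_eq_and_mul_eq (w - c) ((r : ℂ) ^ 2)
    have hsum' : s + t = w - c := (add_comm s t).trans hsum
    have hprod' : s * t = (r : ℂ) ^ 2 := (mul_comm s t).trans hprod
    have ht : ‖t‖ ≠ r := fun h => hw (im_eq_zero_and_abs_re_le_of_norm_eq hr hsum hprod h)
    have hs : ‖s‖ ≠ r := fun h => hw (im_eq_zero_and_abs_re_le_of_norm_eq hr hsum' hprod' h)
    have hnorm : ‖t‖ * ‖s‖ = r * r := by
      rw [← norm_mul, hprod, norm_pow, norm_real, Real.norm_of_nonneg hr.le, sq]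
    rcases lt_or_gt_of_ne ht with ht | ht
    · refine mem_image_add_sq_div_sub hr.le hsum' hprod' ?_
      by_contra! hs_le
      nlinarith [norm_nonneg t, lt_of_le_of_ne hs_le hs]
    · exact mem_image_add_sq_div_sub hr.le hsum hprod ht

end Complex

theorem loewner_time_one_map_example :
    Set.InjOn (fun z : ℂ => z + 2 / (z - 2 * (Real.sqrt 2 : ℂ)))
      {z : ℂ | Real.sqrt 2 < ‖z - 2 * (Real.sqrt 2 : ℂ)‖} ∧
    (fun z : ℂ => z + 2 / (z - 2 * (Real.sqrt 2 : ℂ))) ''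
        {z : ℂ | Real.sqrt 2 < ‖z - 2 * (Real.sqrt 2 : ℂ)‖}
      = {w : ℂ | w.im = 0 ∧ 0 ≤ w.re ∧ w.re ≤ 4 * Real.sqrt 2}ᶜ := by
  have hr : 0 < Real.sqrt 2 := Real.sqrt_pos.2 two_pos
  have hr_sq : (Real.sqrt 2 : ℂ) ^ 2 = 2 := by
    rw [← ofReal_pow, Real.sq_sqrt zero_le_two, ofReal_ofNat]
  have hslit : {w : ℂ | (w - 2 * (Real.sqrt 2 : ℂ)).im = 0 ∧
      |(w - 2 * (Real.sqrt 2 : ℂ)).re| ≤ 2 * Real.sqrt 2} =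
      {w : ℂ | w.im = 0 ∧ 0 ≤ w.re ∧ w.re ≤ 4 * Real.sqrt 2} := by
    ext w
    simp only [Set.mem_ofPred_eq, sub_im, sub_re, mul_im, mul_re, ofReal_re, ofReal_im, re_ofNat,
      im_ofNat, abs_le]
    constructor <;> rintro ⟨him, h₁, h₂⟩ <;> refine ⟨by simpa using him, ?_, ?_⟩ <;> linarith
  have himage := Complex.image_add_sq_div_sub (2 * (Real.sqrt 2 : ℂ)) hr
  rw [hr_sq, hslit] at himage
  exact ⟨hr_sq ▸ Complex.injOn_add_sq_div_sub _ hr.le, himage⟩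
end
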